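/- arXiv:2501.12219 — 5 statements merged into one kernel-verified Lean document; each statement's English description precedes it below -/
import Mathlib

section
/- Let A be an n×n complex matrix whose associated digraph (with an edge j→i when a_{ij} ≠ 0) is strongly connected, and let λ be an eigenvalue of A satisfying |λ − a_{ii}| ≥ Σ_{j≠i} |a_{ij}| for every i. Then |λ − a_{ii}| = Σ_{j≠i} |a_{ij}| for every i, i.e., λ lies on the boundary of every Gershgorin disc. -/
/-!
Take an eigenvector `v` and a coordinate `i` where `|v i|` is maximal. The eigenvalue equation
in row `i` gives `|λ - a_ii| |v i| ≤ Σ_{j≠i} |a_ij| |v j| ≤ (Σ_{j≠i} |a_ij|) |v i|`, and the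
hypothesis `Σ_{j≠i} |a_ij| ≤ |λ - a_ii|` squeezes this chain to equalities: row `i` is on the
boundary of its disc, and every `j` with `a_ij ≠ 0` has `|v j| = |v i|`, so is maximal too.
Strong connectivity carries maximality from one coordinate to all of them.
-/

open Complex Matrix Finset

namespace Matrix

variable {K n : Type*} [Fintype n] [DecidableEq n]

theorem exists_mulVec_eq_smul_of_mem_spectrum [Field K] {A : Matrix n n K} {μ : K}
    (hμ : μ ∈ spectrum K A) : ∃ v ≠ 0, A *ᵥ v = μ • v := by
  rw [← spectrum_toLin', ← Module.End.hasEigenvalue_iff_mem_spectrum] at hμ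
  obtain ⟨v, hv, hv0⟩ := hμ.exists_hasEigenvector
  exact ⟨v, hv0, by rw [← toLin'_apply]; exact Module.End.mem_eigenspace_iff.mp hv⟩

section NormedField

variable [NormedField K] {A : Matrix n n K} {v : n → K} {μ : K}

theorem norm_sub_diag_mul_le_of_mulVec_eq_smul (hv : A *ᵥ v = μ • v) (i : n) :
    ‖μ - A i i‖ * ‖v i‖ ≤ ∑ j ∈ univ.erase i, ‖A i j‖ * ‖v j‖ := by
  have hrow : (μ - A i i) * v i = ∑ j ∈ univ.erase i, A i j * v j := by
    have hi : ∑ j, A i j * v j = μ * v i := congrFun hv i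
    rw [← add_sum_erase _ _ (mem_univ i)] at hi
    rw [sub_mul, ← hi, add_sub_cancel_left]
  rw [← norm_mul, hrow]
  exact (norm_sum_le _ _).trans_eq (sum_congr rfl fun j _ => norm_mul _ _)

theorem norm_sub_diag_eq_sum_of_mulVec_eq_smul (hv : A *ᵥ v = μ • v) {i : n}
    (hmax : ∀ j, ‖v j‖ ≤ ‖v i‖) (hvi : v i ≠ 0)
    (hge : ∑ j ∈ univ.erase i, ‖A i j‖ ≤ ‖μ - A i i‖) :
    ‖μ - A i i‖ = ∑ j ∈ univ.erase i, ‖A i j‖ := by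
  refine le_antisymm (le_of_mul_le_mul_right ?_ (norm_pos_iff.mpr hvi)) hge
  calc ‖μ - A i i‖ * ‖v i‖ ≤ ∑ j ∈ univ.erase i, ‖A i j‖ * ‖v j‖ :=
        norm_sub_diag_mul_le_of_mulVec_eq_smul hv i
    _ ≤ ∑ j ∈ univ.erase i, ‖A i j‖ * ‖v i‖ :=
        sum_le_sum fun j _ => mul_le_mul_of_nonneg_left (hmax j) (norm_nonneg _)
    _ = (∑ j ∈ univ.erase i, ‖A i j‖) * ‖v i‖ := (sum_mul _ _ _).symm

theorem norm_apply_eq_of_mulVec_eq_smul (hv : A *ᵥ v = μ • v) {i : n}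
    (hmax : ∀ j, ‖v j‖ ≤ ‖v i‖) (hvi : v i ≠ 0)
    (hge : ∑ j ∈ univ.erase i, ‖A i j‖ ≤ ‖μ - A i i‖) {j : n} (hij : A i j ≠ 0) :
    ‖v j‖ = ‖v i‖ := by
  obtain rfl | hji := eq_or_ne j i
  · rfl
  have hle : ∀ k ∈ univ.erase i, ‖A i k‖ * ‖v k‖ ≤ ‖A i k‖ * ‖v i‖ :=
    fun k _ => mul_le_mul_of_nonneg_left (hmax k) (norm_nonneg _)
  have hsum : ∑ k ∈ univ.erase i, ‖A i k‖ * ‖v k‖ = ∑ k ∈ univ.erase i, ‖A i k‖ * ‖v i‖ := by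
    refine le_antisymm (sum_le_sum hle) ?_
    calc ∑ k ∈ univ.erase i, ‖A i k‖ * ‖v i‖ = ‖μ - A i i‖ * ‖v i‖ := by
          rw [← sum_mul, norm_sub_diag_eq_sum_of_mulVec_eq_smul hv hmax hvi hge]
      _ ≤ ∑ k ∈ univ.erase i, ‖A i k‖ * ‖v k‖ := norm_sub_diag_mul_le_of_mulVec_eq_smul hv i
  have hterm := (sum_eq_sum_iff_of_le hle).mp hsum j (mem_erase.mpr ⟨hji, mem_univ j⟩)
  exact mul_left_cancel₀ (norm_ne_zero_iff.mpr hij) hterm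

end NormedField

end Matrix

/-- "Better Theorem": let `A` be an `n×n` complex matrix whose
digraph (edge `j → i` when `a_{ij} ≠ 0`) is strongly connected, and let `λ` be an
eigenvalue of `A` with `|λ − a_{ii}| ≥ Σ_{j≠i} |a_{ij}|` for every `i`.  Then
`|λ − a_{ii}| = Σ_{j≠i} |a_{ij}|` for every `i`, i.e. `λ` lies on the boundary
of every Gershgorin disc. -/
theorem gershgorin_boundary_of_strongly_connected
    (n : ℕ) (A : Matrix (Fin n) (Fin n) ℂ)
    (hconn : ∀ i j : Fin n, Relation.ReflTransGen (fun u v : Fin n => A v u ≠ 0) i j)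
    (lam : ℂ) (hlam : lam ∈ spectrum ℂ A)
    (hge : ∀ i : Fin n, ∑ j ∈ Finset.univ.erase i, ‖A i j‖ ≤ ‖lam - A i i‖) :
    ∀ i : Fin n, ‖lam - A i i‖ = ∑ j ∈ Finset.univ.erase i, ‖A i j‖ := by
  obtain ⟨v, hv0, hv⟩ := exists_mulVec_eq_smul_of_mem_spectrum hlam
  obtain ⟨k, hk⟩ := Function.ne_iff.mp hv0
  have : Nonempty (Fin n) := ⟨k⟩
  obtain ⟨i₀, hi₀⟩ := Finite.exists_max fun i => ‖v i‖
  have hmax {i : Fin n} (hi : ‖v i‖ = ‖v i₀‖) : ∀ j, ‖v j‖ ≤ ‖v i‖ := hi ▸ hi₀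
  have hne {i : Fin n} (hi : ‖v i‖ = ‖v i₀‖) : v i ≠ 0 :=
    norm_ne_zero_iff.mp (hi ▸ ((norm_pos_iff.mpr hk).trans_le (hi₀ k)).ne')
  have hall (i : Fin n) : ‖v i‖ = ‖v i₀‖ :=
    (hconn i i₀).head_induction_on rfl fun hca _ ha =>
      (norm_apply_eq_of_mulVec_eq_smul hv (hmax ha) (hne ha) (hge _) hca).trans ha
  exact fun i => norm_sub_diag_eq_sum_of_mulVec_eq_smul hv (hmax (hall i)) (hne (hall i)) (hge i)
end

section
/- Let A be an n×n real matrix with Σ_j |a_{ij}| = 1 for every row i, with at least one diagonal entry a_{ii} > 0, and whose digraph is strongly connected. Then every eigenvalue λ of A with |λ| = 1 must equal 1. In particular, if additionally 1 is not an eigenvalue of A, then ρ(A) < 1. -/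
/-!
Let `v` be an eigenvector for `μ` with `‖μ‖ = 1`. In a row `i` where `‖v i‖` is maximal, the
estimate `‖v i‖ = ‖μ v i‖ ≤ ∑ⱼ ‖a_ij‖ ‖v j‖ ≤ ‖v i‖` is an equality, so `‖v j‖` is maximal as
well whenever `a_ij ≠ 0`. By strong connectivity `‖v j‖` is independent of `j`, hence
Gershgorin's estimate holds in every row: `μ` lies on every Gershgorin disc. In the row with
`a_kk > 0` this reads `‖μ - a_kk‖ ≤ 1 - a_kk`, and since `‖μ - a‖² = 1 - 2a Re μ + a²` for
`‖μ‖ = 1`, it forces `Re μ = 1`, i.e. `μ = 1`. Every eigenvalue has `‖μ‖ ≤ 1` by Gershgorin,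
which gives the second claim.
-/

open Complex Matrix Finset

namespace Matrix

open Module.End Metric

variable {n K : Type*} [Fintype n] [NormedField K] {A : Matrix n n K} {v : n → K} {μ : K}

theorem norm_mul_norm_le_sum_of_mulVec_eq_smul (hAv : A *ᵥ v = μ • v) (i : n) :
    ‖μ‖ * ‖v i‖ ≤ ∑ j, ‖A i j‖ * ‖v j‖ := by
  rw [← norm_mul, ← smul_eq_mul, ← Pi.smul_apply, ← hAv]
  exact (norm_sum_le _ _).trans_eq (by simp only [norm_mul])

theorem norm_sub_diag_mul_norm_le_sum_of_mulVec_eq_smul [DecidableEq n]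
    (hAv : A *ᵥ v = μ • v) (i : n) :
    ‖μ - A i i‖ * ‖v i‖ ≤ ∑ j ∈ univ.erase i, ‖A i j‖ * ‖v j‖ := by
  have hsplit : (μ - A i i) * v i = ∑ j ∈ univ.erase i, A i j * v j := by
    rw [sub_mul, ← smul_eq_mul, ← Pi.smul_apply, ← hAv, Finset.sum_erase_eq_sub (mem_univ i)]
    rfl
  rw [← norm_mul, hsplit]
  exact (norm_sum_le _ _).trans_eq (by simp only [norm_mul])

theorem sum_erase_norm_le_one_sub_norm_diag [DecidableEq n] {i : n}
    (hrow : ∑ j, ‖A i j‖ ≤ 1) : ∑ j ∈ univ.erase i, ‖A i j‖ ≤ 1 - ‖A i i‖ := by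
  rw [← Finset.add_sum_erase _ _ (mem_univ i)] at hrow
  linarith

theorem norm_le_one_of_hasEigenvalue [DecidableEq n] (hrow : ∀ i, ∑ j, ‖A i j‖ ≤ 1)
    (hμ : HasEigenvalue (toLin' A) μ) : ‖μ‖ ≤ 1 := by
  obtain ⟨k, hk⟩ := eigenvalue_mem_ball hμ
  rw [mem_closedBall_iff_norm] at hk
  calc ‖μ‖ ≤ ‖μ - A k k‖ + ‖A k k‖ := norm_le_norm_sub_add _ _
    _ ≤ 1 := by linarith [sum_erase_norm_le_one_sub_norm_diag (hrow k)]

theorem norm_eq_of_mulVec_eq_smul_of_norm_eq_one {i j : n} (hrow : ∑ j, ‖A i j‖ ≤ 1)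
    (hAv : A *ᵥ v = μ • v) (hμ1 : ‖μ‖ = 1) (hmax : ∀ j, ‖v j‖ ≤ ‖v i‖) (hij : A i j ≠ 0) :
    ‖v j‖ = ‖v i‖ := by
  have hle : ∀ j ∈ univ, ‖A i j‖ * ‖v j‖ ≤ ‖A i j‖ * ‖v i‖ :=
    fun j _ => mul_le_mul_of_nonneg_left (hmax j) (norm_nonneg _)
  have heq : ∑ j, ‖A i j‖ * ‖v j‖ = ∑ j, ‖A i j‖ * ‖v i‖ := by
    refine le_antisymm (sum_le_sum hle) ?_
    calc ∑ j, ‖A i j‖ * ‖v i‖ = (∑ j, ‖A i j‖) * ‖v i‖ := (sum_mul _ _ _).symm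
      _ ≤ ‖μ‖ * ‖v i‖ := by rw [hμ1]; exact mul_le_mul_of_nonneg_right hrow (norm_nonneg _)
      _ ≤ ∑ j, ‖A i j‖ * ‖v j‖ := norm_mul_norm_le_sum_of_mulVec_eq_smul hAv i
  exact mul_left_cancel₀ (norm_ne_zero_iff.mpr hij)
    ((sum_eq_sum_iff_of_le hle).mp heq j (mem_univ j))

theorem eigenvalue_mem_ball_of_norm_eq_one [DecidableEq n] (hrow : ∀ i, ∑ j, ‖A i j‖ ≤ 1)
    (hconn : ∀ i j, Relation.ReflTransGen (fun u v => A v u ≠ 0) i j)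
    (hμ : HasEigenvalue (toLin' A) μ) (hμ1 : ‖μ‖ = 1) (k : n) :
    μ ∈ closedBall (A k k) (∑ j ∈ univ.erase k, ‖A k j‖) := by
  obtain ⟨v, hv, hv0⟩ := hμ.exists_hasEigenvector
  have hAv : A *ᵥ v = μ • v := by rw [← toLin'_apply]; exact mem_eigenspace_iff.mp hv
  obtain ⟨j₀, hj₀⟩ := Function.ne_iff.mp hv0
  have : Nonempty n := ⟨j₀⟩
  obtain ⟨i, hmax⟩ := Finite.exists_max (‖v ·‖)
  have hconst : ∀ j, ‖v j‖ = ‖v i‖ := fun j =>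
    (hconn j i).head_induction_on rfl fun hba _ hc =>
      hc ▸ norm_eq_of_mulVec_eq_smul_of_norm_eq_one (hrow _) hAv hμ1 (hc ▸ hmax) hba
  have hpos : 0 < ‖v k‖ := hconst k ▸ (norm_pos_iff.mpr hj₀).trans_le (hmax j₀)
  have hk := norm_sub_diag_mul_norm_le_sum_of_mulVec_eq_smul hAv k
  simp only [hconst, ← sum_mul] at hk
  rw [mem_closedBall_iff_norm]
  exact le_of_mul_le_mul_right hk (hconst k ▸ hpos)

end Matrix

theorem Complex.eq_one_of_norm_eq_one_of_norm_sub_ofReal_le {z : ℂ} {a : ℝ} (ha : 0 < a)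
    (hz : ‖z‖ = 1) (h : ‖z - a‖ ≤ 1 - a) : z = 1 := by
  have hz2 : z.re ^ 2 + z.im ^ 2 = 1 := by
    have hsq : ‖z‖ ^ 2 = 1 := by rw [hz, one_pow]
    rw [Complex.sq_norm, normSq_apply] at hsq
    linarith
  have hza2 : (z.re - a) ^ 2 + z.im ^ 2 ≤ (1 - a) ^ 2 := by
    have h2 := pow_le_pow_left₀ (norm_nonneg _) h 2
    rwa [Complex.sq_norm, normSq_apply, sub_re, sub_im, ofReal_re, ofReal_im, sub_zero, ← sq,
      ← sq] at h2
  have hre : z.re = 1 := by nlinarith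
  exact Complex.ext hre (by simp only [one_im]; nlinarith)

/-- let `A` be an `n×n` real matrix whose absolute row sums all
equal `1`, with at least one diagonal entry `a_{ii} > 0`, and whose digraph
(edge `j → i` when `a_{ij} ≠ 0`) is strongly connected.  Then every eigenvalue
`λ` of `A` with `|λ| = 1` equals `1`; in particular, if `1` is not an
eigenvalue of `A`, then `ρ(A) < 1`. -/
theorem unit_modulus_eigenvalue_eq_one
    (n : ℕ) (A : Matrix (Fin n) (Fin n) ℝ)
    (hrow : ∀ i : Fin n, ∑ j : Fin n, |A i j| = 1)
    (hdiag : ∃ i : Fin n, 0 < A i i)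
    (hconn : ∀ i j : Fin n, Relation.ReflTransGen (fun u v : Fin n => A v u ≠ 0) i j) :
    (∀ lam : ℂ, lam ∈ spectrum ℂ (A.map (Complex.ofReal)) → ‖lam‖ = 1 → lam = 1) ∧
    ((1 : ℂ) ∉ spectrum ℂ (A.map (Complex.ofReal)) →
      ∀ lam : ℂ, lam ∈ spectrum ℂ (A.map (Complex.ofReal)) → ‖lam‖ < 1) := by
  set M := A.map Complex.ofReal
  have hrowM : ∀ i, ∑ j, ‖M i j‖ ≤ 1 := fun i => by simp [M, hrow i]
  have hconnM : ∀ i j, Relation.ReflTransGen (fun u v => M v u ≠ 0) i j := fun i j =>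
    Relation.ReflTransGen.mono (fun u v h => by simpa [M] using h) _ _ (hconn i j)
  have heig : ∀ lam ∈ spectrum ℂ M, Module.End.HasEigenvalue (toLin' M) lam := fun lam h =>
    Module.End.hasEigenvalue_iff_mem_spectrum.mpr (by rwa [spectrum_toLin'])
  have hunit : ∀ lam ∈ spectrum ℂ M, ‖lam‖ = 1 → lam = 1 := by
    intro lam hlam h1
    obtain ⟨k, hk⟩ := hdiag
    have hball := eigenvalue_mem_ball_of_norm_eq_one hrowM hconnM (heig lam hlam) h1 k
    have hdisc := sum_erase_norm_le_one_sub_norm_diag (hrowM k)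
    rw [mem_closedBall_iff_norm] at hball
    simp only [M, map_apply, Complex.norm_real, Real.norm_eq_abs, abs_of_pos hk] at hball hdisc
    exact Complex.eq_one_of_norm_eq_one_of_norm_sub_ofReal_le hk h1 (hball.trans hdisc)
  refine ⟨hunit, fun h1 lam hlam => ?_⟩
  refine (norm_le_one_of_hasEigenvalue hrowM (heig lam hlam)).lt_of_ne fun hlam1 => ?_
  exact h1 (hunit lam hlam hlam1 ▸ hlam)
end

section
/- For every x < 0 and τ ∈ [0, π/(2|x|)), all roots z ∈ ℂ of the equation z = x e^{−zτ} have strictly negative real part. -/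
open Complex Real

/-!
If a root `z` had `0 ≤ Re z`, then `|z| = |x| e^{-τ Re z} ≤ |x|`, so `|τ Im z| ≤ |x| τ < π/2` and
`cos (τ Im z) > 0`. Taking real parts, `Re z = x e^{-τ Re z} cos (τ Im z) < 0` since `x < 0`.
-/

lemma norm_le_of_eq_mul_exp_neg_mul {c z : ℂ} {τ : ℝ} (hτ : 0 ≤ τ)
    (hz : z = c * Complex.exp (-z * τ)) (hre : 0 ≤ z.re) : ‖z‖ ≤ ‖c‖ := by
  have hexp : Real.exp (-(z.re * τ)) ≤ 1 :=
    Real.exp_le_one_iff.mpr (neg_nonpos.mpr (mul_nonneg hre hτ))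
  calc ‖z‖ = ‖c‖ * Real.exp (-(z.re * τ)) := by
        conv_lhs => rw [hz]
        simp [Complex.norm_exp]
    _ ≤ ‖c‖ := mul_le_of_le_one_right (norm_nonneg c) hexp

lemma re_eq_of_eq_ofReal_mul_exp {x τ : ℝ} {z : ℂ} (hz : z = x * Complex.exp (-z * τ)) :
    z.re = x * (Real.exp (-(z.re * τ)) * Real.cos (z.im * τ)) := by
  conv_lhs => rw [hz]
  simp [Complex.exp_re]

lemma cos_mul_pos_of_abs_le {b c τ : ℝ} (hb : |b| ≤ c) (hτ : 0 ≤ τ) (hcτ : c * τ < π / 2) :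
    0 < Real.cos (b * τ) := by
  have hbτ : |b * τ| < π / 2 := by
    rw [abs_mul, abs_of_nonneg hτ]
    exact (mul_le_mul_of_nonneg_right hb hτ).trans_lt hcτ
  exact Real.cos_pos_of_mem_Ioo (abs_lt.mp hbτ)

/-- Hayes criterion: for every `x < 0` and every delay
`τ ∈ [0, π/(2|x|))`, all roots `z ∈ ℂ` of `z = x e^{−zτ}` have strictly
negative real part. -/
theorem hayes_stability (x : ℝ) (hx : x < 0) (τ : ℝ) (hτ0 : 0 ≤ τ)
    (hτ : τ < π / (2 * |x|)) :
    ∀ z : ℂ, z = (x : ℂ) * Complex.exp (-z * (τ : ℂ)) → z.re < 0 := by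
  intro z hz
  by_contra! hre
  have hxτ : |x| * τ < π / 2 := by
    rw [lt_div_iff₀ (by simp [hx.ne])] at hτ
    linarith
  have him : |z.im| ≤ |x| := by
    simpa using (abs_im_le_norm z).trans (norm_le_of_eq_mul_exp_neg_mul hτ0 hz hre)
  have hcos := cos_mul_pos_of_abs_le him hτ0 hxτ
  have hneg : x * (Real.exp (-(z.re * τ)) * Real.cos (z.im * τ)) < 0 :=
    mul_neg_of_neg_of_pos hx (mul_pos (Real.exp_pos _) hcos)
  linarith [re_eq_of_eq_ofReal_mul_exp hz]
end

section
/- With the block companion matrix A of the delayed system as above, the signed digraph G(W) is structurally balanced if and only if the signed digraph G(A) is structurally balanced. -/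
/-!
Put each chain `{(k, i) | k}` on the side of `i`: entries of `A` between different chains
are off-diagonal entries of `W`, and those inside a chain are diagonal entries of `W` or `1`.
Conversely, the subdiagonal entries `A (k + 1, i) (k, i) = 1` force a balancing partition of
`A` to be constant on each chain, and `w_ij` for `i ≠ j` reappears as `A (0, i) (τ, j)`, so
the partition of the first block balances `W`, whose diagonal only needs `w_ii ≥ 0`.
-/

open Matrix

/-- A signed digraph (given by a weight matrix `M`) is structurally balanced if
its vertices admit a bipartition such that all edges within each part have
nonnegative weight and all edges between the parts have nonpositive weight. -/
def StructurallyBalanced {ι : Type*} (M : Matrix ι ι ℝ) : Prop :=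
  ∃ s : ι → Bool, ∀ i j : ι,
    (s i = s j → 0 ≤ M i j) ∧ (s i ≠ s j → M i j ≤ 0)

/-- The block companion matrix of the delayed system
`X(k+1) = Ŵ X(k) + W̃ X(k-τ)`, with first block row `[Ŵ, 0, …, 0, W̃]`
(`Ŵ = diag(W)`, `W̃ = W − Ŵ`) and identity blocks on the subdiagonal. -/
def companion (n τ : ℕ) (W : Matrix (Fin n) (Fin n) ℝ) :
    Matrix (Fin (τ + 1) × Fin n) (Fin (τ + 1) × Fin n) ℝ :=
  fun p q =>
    (if p.1 = 0 ∧ q.1 = 0 ∧ p.2 = q.2 then W p.2 q.2 else 0) +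
    (if p.1 = 0 ∧ q.1 = Fin.last τ ∧ p.2 ≠ q.2 then W p.2 q.2 else 0) +
    (if (p.1 : ℕ) = (q.1 : ℕ) + 1 ∧ p.2 = q.2 then 1 else 0)

def IsBalancingPartition {ι : Type*} (M : Matrix ι ι ℝ) (s : ι → Bool) : Prop :=
  ∀ i j : ι, (s i = s j → 0 ≤ M i j) ∧ (s i ≠ s j → M i j ≤ 0)

theorem structurallyBalanced_iff_exists_isBalancingPartition {ι : Type*} (M : Matrix ι ι ℝ) :
    StructurallyBalanced M ↔ ∃ s, IsBalancingPartition M s :=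
  Iff.rfl

theorem IsBalancingPartition.apply_eq_of_pos {ι : Type*} {M : Matrix ι ι ℝ} {s : ι → Bool}
    (hs : IsBalancingPartition M s) {i j : ι} (hpos : 0 < M i j) : s i = s j := by
  by_contra hne
  exact ((hs i j).2 hne).not_gt hpos

section Companion

variable {n τ : ℕ} (W : Matrix (Fin n) (Fin n) ℝ)

theorem companion_apply_of_ne {i j : Fin n} (hij : i ≠ j) (k l : Fin (τ + 1)) :
    companion n τ W (k, i) (l, j) = if k = 0 ∧ l = Fin.last τ then W i j else 0 := by
  simp [companion, hij]

theorem companion_nonneg {i j : Fin n} (hW : 0 ≤ W i j) (k l : Fin (τ + 1)) :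
    0 ≤ companion n τ W (k, i) (l, j) := by
  unfold companion
  split_ifs <;> linarith

theorem companion_succ_castSucc (k : Fin τ) (i : Fin n) :
    companion n τ W (k.succ, i) (k.castSucc, i) = 1 := by
  simp [companion, Fin.succ_ne_zero]

variable {W}

theorem IsBalancingPartition.companion_comp_snd {s : Fin n → Bool} (hs : IsBalancingPartition W s) :
    IsBalancingPartition (companion n τ W) (s ∘ Prod.snd) := by
  rintro ⟨k, i⟩ ⟨l, j⟩
  refine ⟨fun h => companion_nonneg W ((hs i j).1 h) k l, fun h => ?_⟩
  rw [companion_apply_of_ne W (ne_of_apply_ne s h)]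
  split_ifs
  · exact (hs i j).2 h
  · rfl

theorem IsBalancingPartition.apply_eq_apply_zero {s : Fin (τ + 1) × Fin n → Bool}
    (hs : IsBalancingPartition (companion n τ W) s) (k : Fin (τ + 1)) (i : Fin n) :
    s (k, i) = s (0, i) := by
  induction k using Fin.induction with
  | zero => rfl
  | succ k ih =>
    rw [← ih]
    exact hs.apply_eq_of_pos (by rw [companion_succ_castSucc]; exact one_pos)

theorem IsBalancingPartition.of_companion (hdiag : ∀ i, 0 ≤ W i i)
    {s : Fin (τ + 1) × Fin n → Bool} (hs : IsBalancingPartition (companion n τ W) s) :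
    IsBalancingPartition W fun i => s (0, i) := by
  intro i j
  rcases eq_or_ne i j with rfl | hij
  · exact ⟨fun _ => hdiag i, fun h => absurd rfl h⟩
  · have hij' := hs (0, i) (Fin.last τ, j)
    rwa [companion_apply_of_ne W hij, if_pos ⟨rfl, rfl⟩, hs.apply_eq_apply_zero (Fin.last τ) j] at hij'

end Companion

/-- the signed digraph `G(W)` (with nonnegative diagonal, i.e.
`Ŵ ≥ 0`) is structurally balanced iff the signed digraph `G(A)` of the block
companion matrix is structurally balanced. -/
theorem structurally_balanced_iff_companion
    (n τ : ℕ) (W : Matrix (Fin n) (Fin n) ℝ)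
    (hdiag : ∀ i : Fin n, 0 ≤ W i i) :
    StructurallyBalanced W ↔ StructurallyBalanced (companion n τ W) := by
  rw [structurallyBalanced_iff_exists_isBalancingPartition,
    structurallyBalanced_iff_exists_isBalancingPartition]
  exact ⟨fun ⟨_, hs⟩ => ⟨_, hs.companion_comp_snd⟩, fun ⟨_, hs⟩ => ⟨_, hs.of_companion hdiag⟩⟩
end

section
/- Under the hypotheses P_{+/+} + P_{+/0} < 1 and P_{−/−} + P_{−/0} < 1 (with all five proportions nonnegative summing to 1 and P̂ > 0), the ratio |P̄|/P̂ is strictly less than 1, where P̂ and P̄ are defined as P̂ = P_{+/+} + P_{+/−} + P_{−/−} + ½P_{+/0} + ½P_{−/0} and P̄ = P_{+/+} − P_{−/−} + ½P_{+/0} − ½P_{−/0}. -/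
theorem outlier_ratio_lt_one_general
    (Ppp Pmm Ppm Pp0 Pm0 : ℝ)
    (hpp : 0 ≤ Ppp) (hmm : 0 ≤ Pmm)
    (hsum : Ppp + Pmm + Ppm + Pp0 + Pm0 = 1)
    (htrust : Ppp + Pp0 < 1) (hmistrust : Pmm + Pm0 < 1)
    (Phat Pbar : ℝ)
    (hPhat : Phat = Ppp + Ppm + Pmm + Pp0 / 2 + Pm0 / 2)
    (hPbar : Pbar = Ppp - Pmm + Pp0 / 2 - Pm0 / 2) :
    |Pbar| / Phat < 1 := by
  have hsub : Phat - Pbar = (1 - (Ppp + Pp0)) + Pmm := by rw [hPhat, hPbar]; linarith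
  have hadd : Phat + Pbar = (1 - (Pmm + Pm0)) + Ppp := by rw [hPhat, hPbar]; linarith
  have hlt : |Pbar| < Phat := abs_lt.mpr ⟨by linarith, by linarith⟩
  exact (div_lt_one ((abs_nonneg Pbar).trans_lt hlt)).mpr hlt

/-- under `P_{+/+} + P_{+/0} < 1` and `P_{−/−} + P_{−/0} < 1`
(all five nonnegative proportions summing to `1`, `P̂ > 0`), the outlier-ratio
`|P̄|/P̂` is strictly less than `1`. -/
theorem outlier_ratio_lt_one
    (Ppp Pmm Ppm Pp0 Pm0 : ℝ)
    (hpp : 0 ≤ Ppp) (hmm : 0 ≤ Pmm) (hpm : 0 ≤ Ppm) (hp0 : 0 ≤ Pp0) (hm0 : 0 ≤ Pm0)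
    (hsum : Ppp + Pmm + Ppm + Pp0 + Pm0 = 1)
    (htrust : Ppp + Pp0 < 1) (hmistrust : Pmm + Pm0 < 1)
    (Phat Pbar : ℝ)
    (hPhat : Phat = Ppp + Ppm + Pmm + Pp0 / 2 + Pm0 / 2)
    (hPbar : Pbar = Ppp - Pmm + Pp0 / 2 - Pm0 / 2)
    (hpos : 0 < Phat) :
    |Pbar| / Phat < 1 :=
  outlier_ratio_lt_one_general Ppp Pmm Ppm Pp0 Pm0 hpp hmm hsum htrust hmistrust Phat Pbar hPhat
    hPbar
end
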